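/- arXiv:2110.12616 — 2 statements merged into one kernel-verified Lean document; each statement's English description precedes it below -/
import Mathlib

section
/- For any Boolean function f : {0,1}^n → {0,1}, the spectral norm of the adjacency matrix of its sensitivity graph is at most sqrt(s_0(f) · s_1(f)). -/
open Finset

/-- Hamming weight of a Boolean string. -/
def wt {n : ℕ} (x : Fin n → Bool) : ℕ := (univ.filter (fun i => x i = true)).card

/-- The threshold function with threshold `k` on `n` bits. -/
def Tk (n k : ℕ) (x : Fin n → Bool) : Bool := decide (k ≤ wt x)

/-- Flip the `i`-th bit of `x`. -/
def flipBit {n : ℕ} (x : Fin n → Bool) (i : Fin n) : Fin n → Bool := Function.update x i (!x i)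

/-- Sensitivity of `f` at input `x`. -/
def sens {n : ℕ} (f : (Fin n → Bool) → Bool) (x : Fin n → Bool) : ℕ :=
  (univ.filter (fun i => f (flipBit x i) ≠ f x)).card

/-- The `b`-sensitivity of `f`: maximum sensitivity over inputs with value `b`. -/
def sensB {n : ℕ} (f : (Fin n → Bool) → Bool) (b : Bool) : ℕ :=
  (univ.filter (fun x => f x = b)).sup (sens f)

/-- Adjacency matrix of the sensitivity graph of `f`. -/
def adjMat {n : ℕ} (f : (Fin n → Bool) → Bool) : Matrix (Fin n → Bool) (Fin n → Bool) ℝ :=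
  fun x y => if hammingDist x y = 1 ∧ f x ≠ f y then 1 else 0

/-- Euclidean norm of a real vector indexed by a finite type. -/
noncomputable def enorm {ι : Type*} [Fintype ι] (v : ι → ℝ) : ℝ :=
  Real.sqrt (∑ i, v i ^ 2)

/-- Spectral norm of a real matrix, as the maximal stretch of a nonzero vector. -/
noncomputable def specNorm {ι : Type*} [Fintype ι] [DecidableEq ι] (A : Matrix ι ι ℝ) : ℝ :=
  sSup {r : ℝ | ∃ v : ι → ℝ, v ≠ 0 ∧ r = _root_.enorm (A.mulVec v) / _root_.enorm v}

/-!
The sensitivity graph is bipartite between `f⁻¹(false)` and `f⁻¹(true)`, and a vertex `x` has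
degree `sens f x ≤ s_{f x}`. Cauchy–Schwarz on a row gives `(Av)_x² ≤ s_{f x} ∑_{y ∼ x} v_y²`;
summing over `x`, each `v_y²` then carries the weight `sens f y · s_{¬f y} ≤ s₀ s₁`
(Schur's test with the row weights `s_{f x}`).
-/

open Matrix

theorem Matrix.sum_mulVec_sq_le_of_weighted_sums_le {ι κ : Type*} [Fintype ι] [Fintype κ]
    (A : Matrix ι κ ℝ) (hA : ∀ i j, 0 ≤ A i j) (r : ι → ℝ) {C : ℝ}
    (hrow : ∀ i, ∑ j, A i j ≤ r i) (hcol : ∀ j, ∑ i, r i * A i j ≤ C) (v : κ → ℝ) :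
    ∑ i, (A *ᵥ v) i ^ 2 ≤ C * ∑ j, v j ^ 2 := by
  have hrow_cs : ∀ i, (A *ᵥ v) i ^ 2 ≤ r i * ∑ j, A i j * v j ^ 2 := fun i =>
    calc (A *ᵥ v) i ^ 2 ≤ (∑ j, A i j) * ∑ j, A i j * v j ^ 2 :=
          sum_sq_le_sum_mul_sum_of_sq_le_mul _ (fun j _ => hA i j)
            (fun j _ => mul_nonneg (hA i j) (sq_nonneg _)) (fun j _ => le_of_eq (by ring))
      _ ≤ r i * ∑ j, A i j * v j ^ 2 :=
          mul_le_mul_of_nonneg_right (hrow i)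
            (sum_nonneg fun j _ => mul_nonneg (hA i j) (sq_nonneg _))
  calc ∑ i, (A *ᵥ v) i ^ 2 ≤ ∑ i, r i * ∑ j, A i j * v j ^ 2 := sum_le_sum fun i _ => hrow_cs i
    _ = ∑ j, (∑ i, r i * A i j) * v j ^ 2 := by
        simp only [mul_sum, sum_mul, mul_assoc]
        exact sum_comm
    _ ≤ ∑ j, C * v j ^ 2 := sum_le_sum fun j _ => mul_le_mul_of_nonneg_right (hcol j) (sq_nonneg _)
    _ = C * ∑ j, v j ^ 2 := (mul_sum _ _ _).symm

theorem specNorm_le_sqrt_of_sum_mulVec_sq_le {ι : Type*} [Fintype ι] [DecidableEq ι]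
    (A : Matrix ι ι ℝ) {C : ℝ} (h : ∀ v, ∑ i, (A *ᵥ v) i ^ 2 ≤ C * ∑ i, v i ^ 2) :
    specNorm A ≤ √C := by
  refine Real.sSup_le ?_ (Real.sqrt_nonneg _)
  rintro _ ⟨v, hv, rfl⟩
  obtain ⟨i, hi⟩ := Function.ne_iff.mp hv
  have hv_pos : 0 < _root_.enorm v :=
    Real.sqrt_pos.mpr (sum_pos' (fun j _ => sq_nonneg _) ⟨i, mem_univ _, sq_pos_of_ne_zero hi⟩)
  rw [div_le_iff₀ hv_pos, _root_.enorm, _root_.enorm,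
    ← Real.sqrt_mul' _ (sum_nonneg fun j _ => sq_nonneg _)]
  exact Real.sqrt_le_sqrt (h v)

section Hamming

variable {n : ℕ}

theorem flipBit_apply_ne_iff (x : Fin n → Bool) (i j : Fin n) : x j ≠ flipBit x i j ↔ j = i := by
  rcases eq_or_ne j i with rfl | h
  · simp [flipBit]
  · simp [flipBit, h]

theorem flipBit_injective (x : Fin n → Bool) : Function.Injective (flipBit x) := fun i j h =>
  (flipBit_apply_ne_iff x j i).mp (by rw [← h, flipBit_apply_ne_iff])

theorem hammingDist_eq_one_iff {x y : Fin n → Bool} :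
    hammingDist x y = 1 ↔ ∃ i, flipBit x i = y := by
  constructor
  · intro h
    obtain ⟨i, hi⟩ := card_eq_one.mp h
    have hdiff : ∀ j, x j ≠ y j ↔ j = i := fun j => by
      simpa using congrArg (j ∈ ·) hi
    refine ⟨i, (Function.eq_update_iff.mpr ⟨?_, fun j hj => ?_⟩).symm⟩
    · simpa [Bool.eq_not, eq_comm] using (hdiff i).mpr rfl
    · exact (not_not.mp (mt (hdiff j).mp hj)).symm
  · rintro ⟨i, rfl⟩
    rw [hammingDist, card_eq_one]
    exact ⟨i, by ext j; simp [flipBit_apply_ne_iff]⟩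

end Hamming

section SensitivityGraph

variable {n : ℕ} (f : (Fin n → Bool) → Bool)

theorem adjMat_nonneg (x y : Fin n → Bool) : 0 ≤ adjMat f x y := by
  unfold adjMat; split <;> norm_num

theorem adjMat_comm (x y : Fin n → Bool) : adjMat f x y = adjMat f y x := by
  simp only [adjMat, hammingDist_comm x y, ne_comm]

theorem sum_adjMat_row (x : Fin n → Bool) : ∑ y, adjMat f x y = sens f x := by
  have hnbrs : univ.filter (fun y => hammingDist x y = 1 ∧ f x ≠ f y)
      = (univ.filter fun i => f (flipBit x i) ≠ f x).image (flipBit x) := by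
    ext y
    simp only [mem_filter, mem_univ, true_and, mem_image, hammingDist_eq_one_iff]
    constructor
    · rintro ⟨⟨i, rfl⟩, hfi⟩
      exact ⟨i, Ne.symm hfi, rfl⟩
    · rintro ⟨i, hfi, rfl⟩
      exact ⟨⟨i, rfl⟩, Ne.symm hfi⟩
  simp only [adjMat]
  rw [sum_boole, hnbrs, card_image_of_injective _ (flipBit_injective x), sens]

theorem sum_adjMat_col (y : Fin n → Bool) : ∑ x, adjMat f x y = sens f y := by
  simp only [adjMat_comm f _ y, sum_adjMat_row]

theorem sens_le_sensB (x : Fin n → Bool) : sens f x ≤ sensB f (f x) :=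
  le_sup (mem_filter.mpr ⟨mem_univ x, rfl⟩)

theorem sum_sensB_mul_adjMat_col (y : Fin n → Bool) :
    ∑ x, (sensB f (f x) : ℝ) * adjMat f x y = sensB f (!f y) * sens f y := by
  rw [← sum_adjMat_col, mul_sum]
  refine sum_congr rfl fun x _ => ?_
  by_cases hxy : hammingDist x y = 1 ∧ f x ≠ f y
  · rw [Bool.eq_not.mpr hxy.2]
  · simp [adjMat, hxy]

end SensitivityGraph

theorem specNorm_le_sqrt_sens (n : ℕ) (f : (Fin n → Bool) → Bool) :
    specNorm (adjMat f) ≤ Real.sqrt ((sensB f false : ℝ) * (sensB f true : ℝ)) := by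
  refine specNorm_le_sqrt_of_sum_mulVec_sq_le _ fun v =>
    (adjMat f).sum_mulVec_sq_le_of_weighted_sums_le (adjMat_nonneg f) (fun x => sensB f (f x))
      (fun x => ?_) (fun y => ?_) v
  · rw [sum_adjMat_row]
    exact_mod_cast sens_le_sensB f x
  · rw [sum_sensB_mul_adjMat_col]
    calc (sensB f (!f y) : ℝ) * sens f y ≤ sensB f (!f y) * sensB f (f y) := by
          gcongr; exact sens_le_sensB f y
      _ = sensB f false * sensB f true := by cases f y <;> simp [mul_comm]
end

section
/- Let f : {0,1}^n → {0,1} be symmetric and non-constant, n ≥ 2, with t = t_f ≤ n/2. The same weight scheme w satisfies the stronger feasibility condition Σ_{i: x_i ≠ y_i} w(x,i) · w(y,i) ≥ 1 for all x, y with f(x) ≠ f(y); hence MM'(f) = O(sqrt(t_f · n)), where MM'(f) uses products w(x,i)w(y,i) instead of sqrt(w(x,i)w(y,i)) in the constraint. -/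
open Finset

/-- The variant `MM'(f)` with products instead of square roots in the constraint. -/
noncomputable def MMval' {n : ℕ} (f : (Fin n → Bool) → Bool) : ℝ :=
  sInf {r : ℝ | ∃ w : (Fin n → Bool) → Fin n → ℝ,
    (∀ x i, 0 ≤ w x i) ∧
    (∀ x y : Fin n → Bool, f x ≠ f y →
      1 ≤ ∑ i ∈ univ.filter (fun i => x i ≠ y i), w x i * w y i) ∧
    (∀ x, ∑ i, w x i ≤ r)}

/-!
A product of the heavy weight `√(n/t)` with the light weight `√(t/n)` is `1`, so a single
disagreeing coordinate carrying such a pair already satisfies the constraint. This happens when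
`x` and `y` lie in the same outer region, and when one of them lies in the middle band
`t ≤ |x| ≤ n - t`: its `t` marked ones (or zeros) cannot all agree with an input having fewer than
`t` ones (or more than `n - t`). When `|x| < t` and `|y| > n - t`, at least `n - 2t + 2`
coordinates have `x i = 0`, `y i = 1`, each contributing `t/n`, and `(n - 2t + 2) t ≥ n` since
`1 ≤ t ≤ n/2`. As `f` is constant on the band, `f x ≠ f y` puts `(x, y)` in one of these cases.
Every row of `w` sums to at most `t √(n/t) + n √(t/n) = 2 √(tn)`.
-/

section BooleanStrings

variable {n : ℕ}

lemma wt_le (x : Fin n → Bool) : wt x ≤ n := by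
  simpa [wt] using card_filter_le univ (fun i => x i = true)

lemma sum_ite_eq_wt_nsmul {M : Type*} [AddCommMonoid M] (x : Fin n → Bool) (a b : M) :
    ∑ i, (if x i then a else b) = wt x • a + (n - wt x) • b := by
  rw [sum_ite, sum_const, sum_const]
  congr 2
  have := card_filter_add_card_filter_not (s := univ) (fun i => x i = true)
  simp only [card_univ, Fintype.card_fin] at this
  simp only [wt]
  omega

lemma exists_mem_eq_false_of_wt_lt {S : Finset (Fin n)} {x : Fin n → Bool} (h : wt x < #S) :
    ∃ i ∈ S, x i = false := by
  obtain ⟨i, hiS, hi⟩ := exists_mem_notMem_of_card_lt_card h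
  exact ⟨i, hiS, by simpa using hi⟩

lemma exists_mem_eq_true_of_lt_card_add_wt {S : Finset (Fin n)} {x : Fin n → Bool}
    (h : n < #S + wt x) : ∃ i ∈ S, x i = true := by
  have hS : wt (fun i => !x i) < #S := by
    have := card_filter_add_card_filter_not (s := univ) (fun i => x i = true)
    simp only [card_univ, Fintype.card_fin] at this
    simp only [wt, Bool.not_eq_true, Bool.not_eq_true'] at this h ⊢
    omega
  obtain ⟨i, hiS, hi⟩ := exists_mem_eq_false_of_wt_lt hS
  exact ⟨i, hiS, by simpa using hi⟩

lemma wt_le_wt_add_card_filter (x y : Fin n → Bool) :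
    wt y ≤ wt x + #(univ.filter fun i => x i = false ∧ y i = true) := by
  refine (card_le_card fun i hi => ?_).trans (card_union_le _ _)
  cases hx : x i <;> simp_all

end BooleanStrings

lemma ite_mul_ite_of_ne {M : Type*} [CommMonoid M] {u v : Bool} (h : u ≠ v) (a b : M) :
    (if u then a else b) * (if v then a else b) = a * b := by
  cases u <;> cases v <;> simp_all [mul_comm]

lemma sqrt_div_mul_sqrt_div {a b : ℝ} (ha : 0 < a) (hb : 0 < b) : √(a / b) * √(b / a) = 1 := by
  rw [← Real.sqrt_mul (by positivity), div_mul_div_comm, mul_comm a, div_self (by positivity),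
    Real.sqrt_one]

lemma mul_sqrt_div_self {a : ℝ} (b : ℝ) (ha : 0 ≤ a) : a * √(b / a) = √(a * b) := by
  rcases ha.eq_or_lt with rfl | ha
  · simp
  · have := Real.sq_sqrt ha.le
    rw [Real.sqrt_div' _ ha.le, Real.sqrt_mul ha.le]
    field_simp
    rw [this, mul_comm]

def disagreementSum {n : ℕ} (w : (Fin n → Bool) → Fin n → ℝ) (x y : Fin n → Bool) : ℝ :=
  ∑ i ∈ univ.filter (fun i => x i ≠ y i), w x i * w y i

lemma MMval'_le {n : ℕ} {f : (Fin n → Bool) → Bool} {w : (Fin n → Bool) → Fin n → ℝ} {r : ℝ}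
    (hw : ∀ x i, 0 ≤ w x i)
    (hfeas : ∀ x y, f x ≠ f y → 1 ≤ disagreementSum w x y)
    (hr : ∀ x, ∑ i, w x i ≤ r) : MMval' f ≤ r := by
  refine csInf_le ⟨0, ?_⟩ ⟨w, hw, hfeas, hr⟩
  rintro s ⟨w', hw', -, hs⟩
  exact (sum_nonneg fun i _ => hw' (fun _ => false) i).trans (hs _)

section DisagreementSum

variable {n : ℕ} {w : (Fin n → Bool) → Fin n → ℝ}

lemma disagreementSum_comm (x y : Fin n → Bool) : disagreementSum w x y = disagreementSum w y x := by
  simp only [disagreementSum, ne_comm (a := x _), mul_comm (w x _)]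

lemma sum_le_disagreementSum (hw : ∀ x i, 0 ≤ w x i) {x y : Fin n → Bool} {S : Finset (Fin n)}
    (hS : ∀ i ∈ S, x i ≠ y i) : ∑ i ∈ S, w x i * w y i ≤ disagreementSum w x y :=
  sum_le_sum_of_subset_of_nonneg (fun i hi => by simpa using hS i hi)
    fun i _ _ => mul_nonneg (hw x i) (hw y i)

lemma one_le_disagreementSum_of_ne (hw : ∀ x i, 0 ≤ w x i) {x y : Fin n → Bool} {i : Fin n}
    (hi : x i ≠ y i) (h : w x i * w y i = 1) : 1 ≤ disagreementSum w x y := by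
  have := sum_le_disagreementSum hw (S := {i}) (by simpa using hi)
  rwa [sum_singleton, h] at this

end DisagreementSum

structure IsWeightScheme (n t : ℕ) (w : (Fin n → Bool) → Fin n → ℝ) : Prop where
  left : ∀ x, wt x < t → ∀ i, w x i =
    if x i then Real.sqrt ((n : ℝ) / t) else Real.sqrt ((t : ℝ) / n)
  right : ∀ x, n - t < wt x → ∀ i, w x i =
    if x i then Real.sqrt ((t : ℝ) / n) else Real.sqrt ((n : ℝ) / t)
  mid : ∀ x, t ≤ wt x → wt x ≤ n - t →
    ∃ S1 S0 : Finset (Fin n), S1.card = t ∧ S0.card = t ∧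
      (∀ i ∈ S1, x i = true) ∧ (∀ i ∈ S0, x i = false) ∧
      (∀ i, w x i = if i ∈ S1 ∪ S0 then Real.sqrt ((n : ℝ) / t) else 0)

namespace IsWeightScheme

variable {n t : ℕ} {w : (Fin n → Bool) → Fin n → ℝ} (hw : IsWeightScheme n t w)
include hw

lemma nonneg (x : Fin n → Bool) (i : Fin n) : 0 ≤ w x i := by
  rcases lt_or_ge (wt x) t with hx | hx
  · rw [hw.left x hx i]; split_ifs <;> positivity
  rcases le_or_gt (wt x) (n - t) with hx' | hx'
  · obtain ⟨S1, S0, -, -, -, -, hS⟩ := hw.mid x hx hx'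
    rw [hS i]; split_ifs <;> positivity
  · rw [hw.right x hx' i]; split_ifs <;> positivity

lemma sum_le (x : Fin n → Bool) : ∑ i, w x i ≤ 2 * √((t : ℝ) * n) := by
  have hA := mul_sqrt_div_self (n : ℝ) t.cast_nonneg
  have hB := mul_sqrt_div_self (t : ℝ) n.cast_nonneg
  rw [mul_comm (n : ℝ) t] at hB
  have hx := wt_le x
  rcases lt_or_ge (wt x) t with hxL | hxM
  · rw [sum_congr rfl fun i _ => hw.left x hxL i, sum_ite_eq_wt_nsmul, nsmul_eq_mul, nsmul_eq_mul]
    have h1 : (wt x : ℝ) ≤ t := by exact_mod_cast hxL.le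
    have h2 : ((n - wt x : ℕ) : ℝ) ≤ n := by exact_mod_cast n.sub_le _
    calc _ ≤ (t : ℝ) * √((n : ℝ) / t) + n * √((t : ℝ) / n) := by gcongr
      _ = _ := by rw [hA, hB]; ring
  rcases le_or_gt (wt x) (n - t) with hxM' | hxR
  · obtain ⟨S1, S0, hS1, hS0, -, -, hS⟩ := hw.mid x hxM hxM'
    rw [sum_congr rfl fun i _ => hS i, sum_ite_mem, univ_inter, sum_const, nsmul_eq_mul]
    have h : ((S1 ∪ S0).card : ℝ) ≤ 2 * t := by
      exact_mod_cast (card_union_le S1 S0).trans (by omega)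
    calc _ ≤ 2 * (t : ℝ) * √((n : ℝ) / t) := by gcongr
      _ = _ := by rw [mul_assoc, hA]
  · rw [sum_congr rfl fun i _ => hw.right x hxR i, sum_ite_eq_wt_nsmul, nsmul_eq_mul, nsmul_eq_mul]
    have h1 : (wt x : ℝ) ≤ n := by exact_mod_cast hx
    have h2 : ((n - wt x : ℕ) : ℝ) ≤ t := by exact_mod_cast (by omega : n - wt x ≤ t)
    calc _ ≤ (n : ℝ) * √((t : ℝ) / n) + t * √((n : ℝ) / t) := by gcongr
      _ = _ := by rw [hA, hB]; ring

-- At least `n - 2t + 2` coordinates have `x i = false`, `y i = true`, each contributing `t / n`.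
lemma one_le_disagreementSum_of_wt_lt_of_lt_wt (htn : 2 * t ≤ n) {x y : Fin n → Bool}
    (hx : wt x < t) (hy : n - t < wt y) : 1 ≤ disagreementSum w x y := by
  set D := univ.filter fun i => x i = false ∧ y i = true
  have hD : ∀ i ∈ D, w x i * w y i = (t : ℝ) / n := by
    intro i hi
    simp only [D, mem_filter, mem_univ, true_and] at hi
    rw [hw.left x hx i, hw.right y hy i, hi.1, hi.2]
    exact Real.mul_self_sqrt (by positivity)
  have hn : 0 < n := by omega
  have hcount : n ≤ #D * t := by
    have : wt y ≤ wt x + #D := wt_le_wt_add_card_filter x y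
    have := wt_le y
    have hDcard : n + 2 ≤ 2 * t + #D := by omega
    -- `#D * t - n ≥ (t - 1) * (n - 2 * t) ≥ 0`
    nlinarith
  calc (1 : ℝ) ≤ #D * ((t : ℝ) / n) := by
        rw [← mul_div_assoc, one_le_div (by exact_mod_cast hn)]
        exact_mod_cast hcount
    _ = ∑ i ∈ D, w x i * w y i := by rw [sum_congr rfl hD, sum_const, nsmul_eq_mul]
    _ ≤ _ := sum_le_disagreementSum hw.nonneg fun i hi => by simp_all [D]

lemma one_le_disagreementSum_of_wt_le (htn : 2 * t ≤ n) {x y : Fin n → Bool} (hxy : x ≠ y)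
    (hout : wt x < t ∨ n - t < wt y) (hle : wt x ≤ wt y) : 1 ≤ disagreementSum w x y := by
  have hy := wt_le y
  have hAB : √((n : ℝ) / t) * √((t : ℝ) / n) = 1 :=
    sqrt_div_mul_sqrt_div (Nat.cast_pos.2 (by omega)) (Nat.cast_pos.2 (by omega))
  obtain ⟨i, hi⟩ := Function.ne_iff.1 hxy
  rcases lt_or_ge (wt x) t with hxL | hxM
  · rcases lt_or_ge (wt y) t with hyL | hyM
    · refine one_le_disagreementSum_of_ne hw.nonneg hi ?_
      rw [hw.left x hxL, hw.left y hyL, ite_mul_ite_of_ne hi, hAB]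
    rcases le_or_gt (wt y) (n - t) with hyM' | hyR
    · obtain ⟨S1, S0, hS1, -, hS1y, -, hS⟩ := hw.mid y hyM hyM'
      obtain ⟨j, hjS, hxj⟩ := exists_mem_eq_false_of_wt_lt (hS1 ▸ hxL : wt x < #S1)
      refine one_le_disagreementSum_of_ne hw.nonneg (i := j) (by simp [hxj, hS1y j hjS]) ?_
      rw [hw.left x hxL, hS, if_pos (mem_union_left _ hjS), hxj, if_neg Bool.false_ne_true,
        mul_comm, hAB]
    · exact hw.one_le_disagreementSum_of_wt_lt_of_lt_wt htn hxL hyR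
  · have hyR := hout.resolve_left hxM.not_gt
    rcases le_or_gt (wt x) (n - t) with hxM' | hxR
    · obtain ⟨S1, S0, -, hS0, -, hS0x, hS⟩ := hw.mid x hxM hxM'
      obtain ⟨j, hjS, hyj⟩ := exists_mem_eq_true_of_lt_card_add_wt (S := S0) (x := y) (by omega)
      refine one_le_disagreementSum_of_ne hw.nonneg (i := j) (by simp [hyj, hS0x j hjS]) ?_
      rw [hS, if_pos (mem_union_right _ hjS), hw.right y hyR, hyj, if_pos rfl, hAB]
    · refine one_le_disagreementSum_of_ne hw.nonneg hi ?_
      rw [hw.right x hxR, hw.right y (hxR.trans_le hle), ite_mul_ite_of_ne hi, mul_comm, hAB]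

lemma one_le_disagreementSum (htn : 2 * t ≤ n) {x y : Fin n → Bool} (hxy : x ≠ y)
    (hout : ¬(wt x ∈ Set.Icc t (n - t) ∧ wt y ∈ Set.Icc t (n - t))) :
    1 ≤ disagreementSum w x y := by
  simp only [Set.mem_Icc] at hout
  rcases le_total (wt x) (wt y) with hle | hle
  · exact hw.one_le_disagreementSum_of_wt_le htn hxy (by omega) hle
  · rw [disagreementSum_comm]
    exact hw.one_le_disagreementSum_of_wt_le htn hxy.symm (by omega) hle

end IsWeightScheme

theorem weight_scheme_product_feasible_general (n t : ℕ) (htn : 2 * t ≤ n)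
    (g : ℕ → Bool) (f : (Fin n → Bool) → Bool) (hf : ∀ x, f x = g (wt x))
    (ht : IsLeast {s : ℕ | ∀ a b : ℕ, s ≤ a → a ≤ n - s → s ≤ b → b ≤ n - s → g a = g b} t)
    (w : (Fin n → Bool) → Fin n → ℝ)
    (hleft : ∀ x, wt x < t → ∀ i, w x i =
      if x i then Real.sqrt ((n : ℝ) / t) else Real.sqrt ((t : ℝ) / n))
    (hright : ∀ x, n - t < wt x → ∀ i, w x i =
      if x i then Real.sqrt ((t : ℝ) / n) else Real.sqrt ((n : ℝ) / t))
    (hmid : ∀ x, t ≤ wt x → wt x ≤ n - t →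
      ∃ S1 S0 : Finset (Fin n), S1.card = t ∧ S0.card = t ∧
        (∀ i ∈ S1, x i = true) ∧ (∀ i ∈ S0, x i = false) ∧
        (∀ i, w x i = if i ∈ S1 ∪ S0 then Real.sqrt ((n : ℝ) / t) else 0)) :
    (∀ x y : Fin n → Bool, f x ≠ f y →
      1 ≤ ∑ i ∈ univ.filter (fun i => x i ≠ y i), w x i * w y i) ∧
    MMval' f ≤ 3 * Real.sqrt ((t : ℝ) * n) := by
  have hw : IsWeightScheme n t w := ⟨hleft, hright, hmid⟩
  have hfeas : ∀ x y : Fin n → Bool, f x ≠ f y → 1 ≤ disagreementSum w x y := by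
    refine fun x y hfxy => hw.one_le_disagreementSum htn (fun h => hfxy (h ▸ rfl)) ?_
    rintro ⟨⟨hx, hx'⟩, hy, hy'⟩
    exact hfxy (by rw [hf, hf]; exact ht.1 _ _ hx hx' hy hy')
  refine ⟨hfeas, MMval'_le hw.nonneg hfeas fun x => (hw.sum_le x).trans ?_⟩
  linarith [Real.sqrt_nonneg ((t : ℝ) * n)]

theorem weight_scheme_product_feasible (n t : ℕ) (hn : 2 ≤ n) (htn : 2 * t ≤ n)
    (g : ℕ → Bool) (f : (Fin n → Bool) → Bool) (hf : ∀ x, f x = g (wt x))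
    (hnc : ∃ x y : Fin n → Bool, f x ≠ f y)
    (ht : IsLeast {s : ℕ | ∀ a b : ℕ, s ≤ a → a ≤ n - s → s ≤ b → b ≤ n - s → g a = g b} t)
    (w : (Fin n → Bool) → Fin n → ℝ)
    (hleft : ∀ x, wt x < t → ∀ i, w x i =
      if x i then Real.sqrt ((n : ℝ) / t) else Real.sqrt ((t : ℝ) / n))
    (hright : ∀ x, n - t < wt x → ∀ i, w x i =
      if x i then Real.sqrt ((t : ℝ) / n) else Real.sqrt ((n : ℝ) / t))
    (hmid : ∀ x, t ≤ wt x → wt x ≤ n - t →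
      ∃ S1 S0 : Finset (Fin n), S1.card = t ∧ S0.card = t ∧
        (∀ i ∈ S1, x i = true) ∧ (∀ i ∈ S0, x i = false) ∧
        (∀ i, w x i = if i ∈ S1 ∪ S0 then Real.sqrt ((n : ℝ) / t) else 0)) :
    (∀ x y : Fin n → Bool, f x ≠ f y →
      1 ≤ ∑ i ∈ univ.filter (fun i => x i ≠ y i), w x i * w y i) ∧
    MMval' f ≤ 3 * Real.sqrt ((t : ℝ) * n) :=
  weight_scheme_product_feasible_general n t htn g f hf ht w hleft hright hmid
end
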